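/- arXiv:math/9908159 — 2 statements merged into one kernel-verified Lean document; each statement's English description precedes it below -/
import Mathlib

section
/- Suppose κ is a regular uncountable cardinal, λ > κ is a strong limit cardinal, and cf(λ) < κ. Then there exists a club of [λ]^{<κ} which contains no unbounded non-stationary subset, i.e., every unbounded subset of this club is stationary. -/
open Cardinal Set

noncomputable section

/-- A finitary function on the ordinals: an arity `n` together with an
`n`-ary function on ordinals. -/
abbrev FinFun := Σ n : ℕ, (Fin n → Ordinal.{0}) → Ordinal.{0}

/-- `[λ]^{<κ}`: the collection of subsets of `λ` (viewed as the set of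
ordinals `< λ`) of cardinality `< κ`. -/
def smallSubsets (lam kap : Cardinal.{0}) : Set (Set Ordinal.{0}) :=
  {a | (∀ x ∈ a, x < lam.ord) ∧ Cardinal.mk ↥a < Cardinal.lift.{1} kap}

/-- The countable family `F` consists of finitary functions *on `λ`*. -/
def FamOn (lam : Cardinal.{0}) (F : Set FinFun) : Prop :=
  ∀ f ∈ F, ∀ x : Fin f.1 → Ordinal.{0}, (∀ i, x i < lam.ord) → f.2 x < lam.ord

/-- The club `C_F` of `[λ]^{<κ}` associated to a family `F` of finitary
functions on `λ`: the members `a` of `[λ]^{<κ}` closed under every function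
of `F` and such that `a ∩ κ` is an ordinal (an initial segment of `κ`). -/
def clubOf (lam kap : Cardinal.{0}) (F : Set FinFun) : Set (Set Ordinal.{0}) :=
  {a | a ∈ smallSubsets lam kap ∧
    (∀ f ∈ F, ∀ x : Fin f.1 → Ordinal.{0}, (∀ i, x i ∈ a) → f.2 x ∈ a) ∧
    ∃ β < kap.ord, a ∩ Set.Iio kap.ord = Set.Iio β}

/-- `C` is a club of `[λ]^{<κ}`. -/
def IsClub' (lam kap : Cardinal.{0}) (C : Set (Set Ordinal.{0})) : Prop :=
  ∃ F : Set FinFun, F.Countable ∧ FamOn lam F ∧ C = clubOf lam kap F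

/-- `S` is a stationary subset of `[λ]^{<κ}`: it meets every club. -/
def IsStationary' (lam kap : Cardinal.{0}) (S : Set (Set Ordinal.{0})) : Prop :=
  ∀ C, IsClub' lam kap C → (S ∩ C).Nonempty

/-- `S` is an unbounded subset of `[λ]^{<κ}`: every member of `[λ]^{<κ}`
is contained in some member of `S`. -/
def IsUnbounded (lam kap : Cardinal.{0}) (S : Set (Set Ordinal.{0})) : Prop :=
  ∀ b ∈ smallSubsets lam kap, ∃ a ∈ S, b ⊆ a

/-- The club filter `E_{λ,κ}`: the filter generated by the clubs of
`[λ]^{<κ}`. -/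
def clubFilter (lam kap : Cardinal.{0}) : Filter (Set Ordinal.{0}) :=
  Filter.generate {C | IsClub' lam kap C}

/-!
Since `λ` is a strong limit, for each `n` there are at most `λ` pairs of some `γ < λ` and a map
`(γ + 1)ⁿ → γ + 1`, so they can be coded by ordinals below `λ`. The club consists of the
`a ∈ [λ]^{<κ}` closed under the decoding maps `(p, x) ↦ (map coded by p)(x)`. Given a club `C_F`,
fix a cofinal `G ⊆ λ` of size `cf λ`; the codes of the functions of `F` cut down at the levels
in `G` form a set `b` of size at most `ℵ₀ · cf λ < κ`. An unbounded `U` inside our club has a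
member `a ⊇ b`, and `a` is closed under each `f ∈ F`: for `x` in `a`, pick `γ ∈ G` above `x` and
`f x`; then `f x` is the decoded value of the code in `b` of `f` cut down at `γ`.
-/

open Function

protected theorem Cardinal.IsStrongLimit.lift {c : Cardinal.{u}} (h : c.IsStrongLimit) :
    (Cardinal.lift.{v} c).IsStrongLimit := by
  refine ⟨by simpa using h.ne_zero, fun x hx => ?_⟩
  obtain ⟨y, hy, rfl⟩ := lt_lift_iff.1 hx
  rw [← lift_two_power]
  exact lift_lt.2 (h.isStrongPrelimit hy)

theorem Cardinal.IsStrongLimit.power_lt {a b c : Cardinal} (hc : c.IsStrongLimit)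
    (ha : a < c) (hb : b < c) : a ^ b < c :=
  calc a ^ b ≤ (2 ^ a) ^ b := power_le_power_right (cantor a).le
    _ = 2 ^ (a * b) := by rw [← power_mul]
    _ < c := hc.isStrongPrelimit (mul_lt_of_lt hc.aleph0_le ha hb)

theorem exists_lt_forall_le_of_forall_lt {α ι : Type*} [LinearOrder α] [OrderBot α]
    [Fintype ι] {o v : α} {x : ι → α} (hx : ∀ i, x i < o) (hv : v < o) :
    ∃ δ < o, (∀ i, x i ≤ δ) ∧ v ≤ δ :=
  ⟨Finset.univ.sup x ⊔ v, max_lt ((Finset.sup_lt_iff (bot_le.trans_lt hv)).2 fun i _ => hx i) hv,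
    fun i => le_sup_of_le_left (Finset.le_sup (Finset.mem_univ i)), le_sup_right⟩

theorem Cardinal.mk_Iic_lt_lift_of_lt_ord {c : Cardinal.{u}} {γ : Ordinal.{u}} (hc : ℵ₀ ≤ c)
    (hγ : γ < c.ord) : #(Iic γ) < Cardinal.lift.{u + 1} c := by
  rw [← Order.Iio_succ, mk_Iio_ordinal, lift_lt, ← lt_ord]
  exact (isSuccLimit_ord hc).succ_lt hγ

/-- A code for an `n`-ary function on `λ` below some `γ < λ`: its restriction to arguments
`≤ γ`, with values capped at `γ`. -/
abbrev BoundedCode (lam : Cardinal.{0}) (n : ℕ) : Type 1 :=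
  Σ γ : Iio lam.ord, (Fin n → Iic γ.1) → Iic γ.1

namespace BoundedCode

variable {lam : Cardinal.{0}} {n : ℕ}

def eval (c : BoundedCode lam n) (x : Fin n → Ordinal.{0}) : Ordinal.{0} :=
  if h : ∀ i, x i ≤ c.1 then c.2 (fun i => ⟨x i, h i⟩) else 0

theorem eval_lt (c : BoundedCode lam n) (x : Fin n → Ordinal.{0}) : c.eval x < lam.ord := by
  refine lt_of_le_of_lt ?_ c.1.2
  unfold eval
  split
  · exact (c.2 _).2
  · exact zero_le

def ofFun (γ : Iio lam.ord) (f : (Fin n → Ordinal.{0}) → Ordinal.{0}) : BoundedCode lam n :=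
  ⟨γ, fun y => ⟨min (f fun i => y i) γ, mem_Iic.2 (min_le_right _ _)⟩⟩

theorem eval_ofFun {γ : Iio lam.ord} {f : (Fin n → Ordinal.{0}) → Ordinal.{0}}
    {x : Fin n → Ordinal.{0}} (hx : ∀ i, x i ≤ γ) (hf : f x ≤ γ) :
    (ofFun γ f).eval x = f x := by
  simp [eval, ofFun, hx, hf]

theorem mk_le (hsl : lam.IsStrongLimit) : #(BoundedCode lam n) ≤ #(Iio lam.ord) := by
  have hsl' := hsl.lift.{0, 1}
  have hfiber (γ : Iio lam.ord) : #((Fin n → Iic γ.1) → Iic γ.1) < Cardinal.lift.{1} lam := by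
    have hIic := mk_Iic_lt_lift_of_lt_ord hsl.aleph0_le γ.2
    rw [← power_def]
    refine hsl'.power_lt hIic ?_
    rw [mk_arrow, lift_id', mk_fin, lift_natCast]
    exact hsl'.power_lt hIic ((natCast_lt_aleph0 (n := n)).trans_le hsl'.aleph0_le)
  calc #(BoundedCode lam n)
        ≤ #(Iio lam.ord) * ⨆ γ : Iio lam.ord, #((Fin n → Iic γ.1) → Iic γ.1) := by
          rw [mk_sigma]; exact sum_le_mk_mul_iSup _
    _ ≤ Cardinal.lift.{1} lam * Cardinal.lift.{1} lam := by
        rw [mk_Iio_ordinal, card_ord]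
        exact mul_le_mul' le_rfl (ciSup_le' fun γ => (hfiber γ).le)
    _ = #(Iio lam.ord) := by rw [mul_eq_self hsl'.aleph0_le, mk_Iio_ordinal, card_ord]

theorem exists_surjective (hsl : lam.IsStrongLimit) (n : ℕ) :
    ∃ d : Iio lam.ord → BoundedCode lam n, Surjective d := by
  have : Nonempty (BoundedCode lam n) :=
    ⟨⟨⟨0, (isSuccLimit_ord hsl.aleph0_le).pos⟩, fun _ => ⟨0, mem_Iic.2 le_rfl⟩⟩⟩
  obtain ⟨e⟩ := Cardinal.le_def _ _ |>.1 (mk_le hsl (n := n))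
  exact ⟨invFun e, invFun_surjective e.injective⟩

end BoundedCode

section CodeClub

variable {lam kap : Cardinal.{0}} {n : ℕ}

def universalFun (d : Iio lam.ord → BoundedCode lam n) : FinFun :=
  ⟨n + 1, fun x => if h : x 0 < lam.ord then (d ⟨x 0, h⟩).eval (Fin.tail x) else 0⟩

theorem universalFun_cons (d : Iio lam.ord → BoundedCode lam n) (p : Iio lam.ord)
    (x : Fin n → Ordinal.{0}) : (universalFun d).2 (Fin.cons p.1 x) = (d p).eval x := by
  simp only [universalFun, Fin.cons_zero, Fin.tail_cons]
  exact dif_pos p.2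

variable (lam kap) in
def codeClub (d : ∀ n, Iio lam.ord → BoundedCode lam n) : Set (Set Ordinal.{0}) :=
  clubOf lam kap (range fun n => universalFun (d n))

variable {d : ∀ n, Iio lam.ord → BoundedCode lam n}

theorem isClub_codeClub : IsClub' lam kap (codeClub lam kap d) := by
  refine ⟨_, countable_range _, ?_, rfl⟩
  rintro _ ⟨n, rfl⟩ (x : Fin (n + 1) → Ordinal.{0}) (hx : ∀ i, x i < lam.ord)
  exact (dif_pos (hx 0)).trans_lt (BoundedCode.eval_lt _ _)

theorem eval_mem_of_mem_codeClub {a : Set Ordinal.{0}} (ha : a ∈ codeClub lam kap d)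
    {p : Iio lam.ord} (hp : p.1 ∈ a) {x : Fin n → Ordinal.{0}} (hx : ∀ i, x i ∈ a) :
    (d n p).eval x ∈ a := by
  have := ha.2.1 _ ⟨n, rfl⟩ (Fin.cons p.1 x) (Fin.forall_fin_succ.2 ⟨by simpa, by simpa⟩)
  rwa [universalFun_cons] at this

def codeSet (hd : ∀ n, Surjective (d n)) (F : Set FinFun) (G : Set (Iio lam.ord)) :
    Set Ordinal.{0} :=
  range fun z : F × G => (surjInv (hd _) (BoundedCode.ofFun z.2.1 z.1.1.2)).1

theorem codeSet_mem_smallSubsets (hunc : ℵ₀ < kap) (hcof : lam.ord.cof < kap)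
    (hd : ∀ n, Surjective (d n)) {F : Set FinFun} (hF : F.Countable) {G : Set (Iio lam.ord)}
    (hG : #G = Cardinal.lift.{1} lam.ord.cof) : codeSet hd F G ∈ smallSubsets lam kap := by
  refine ⟨by rintro _ ⟨z, rfl⟩; exact Subtype.prop _, ?_⟩
  calc #(codeSet hd F G) ≤ #(F × G) := mk_range_le
    _ = #F * #G := by rw [mk_prod, lift_id, lift_id]
    _ ≤ ℵ₀ * Cardinal.lift.{1} lam.ord.cof :=
        mul_le_mul' (mk_le_aleph0_iff.2 hF.to_subtype) hG.le
    _ < Cardinal.lift.{1} kap :=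
        mul_lt_of_lt (aleph0_le_lift.2 hunc.le) (aleph0_lt_lift.2 hunc) (lift_lt.2 hcof)

theorem mem_clubOf_of_codeSet_subset (hd : ∀ n, Surjective (d n)) {F : Set FinFun}
    (hF : FamOn lam F) {G : Set (Iio lam.ord)} (hG : IsCofinal G) {a : Set Ordinal.{0}}
    (ha : a ∈ codeClub lam kap d) (hsub : codeSet hd F G ⊆ a) : a ∈ clubOf lam kap F := by
  refine ⟨ha.1, fun f hf x hx => ?_, ha.2.2⟩
  have hxlt : ∀ i, x i < lam.ord := fun i => ha.1.1 _ (hx i)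
  obtain ⟨δ, hδ, hxδ, hfδ⟩ := exists_lt_forall_le_of_forall_lt hxlt (hF f hf x hxlt)
  obtain ⟨γ, hγG, hδγ : δ ≤ γ⟩ := hG ⟨δ, hδ⟩
  have hcode : (surjInv (hd f.1) (BoundedCode.ofFun γ f.2)).1 ∈ a :=
    hsub ⟨(⟨f, hf⟩, ⟨γ, hγG⟩), rfl⟩
  have := eval_mem_of_mem_codeClub ha hcode hx
  rwa [surjInv_eq (hd f.1),
    BoundedCode.eval_ofFun (fun i => (hxδ i).trans hδγ) (hfδ.trans hδγ)] at this

theorem isStationary_of_isUnbounded_of_subset_codeClub (hunc : ℵ₀ < kap)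
    (hcof : lam.ord.cof < kap) (hd : ∀ n, Surjective (d n)) {U : Set (Set Ordinal.{0})}
    (hU : U ⊆ codeClub lam kap d) (hUnb : IsUnbounded lam kap U) : IsStationary' lam kap U := by
  rintro _ ⟨F, hFc, hF, rfl⟩
  obtain ⟨G, hGcof, hG⟩ := Order.exists_cof_eq (Iio lam.ord)
  rw [Ordinal.cof_Iio, ← Ordinal.lift_cof] at hG
  obtain ⟨a, haU, hsub⟩ := hUnb _ (codeSet_mem_smallSubsets hunc hcof hd hFc hG)
  exact ⟨a, haU, mem_clubOf_of_codeSet_subset hd hF hGcof (hU haU) hsub⟩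

end CodeClub

theorem exists_club_all_unbounded_subsets_stationary_strongLimit_general
    (lam kap : Cardinal.{0}) (hunc : ℵ₀ < kap)
    (hsl : lam.IsStrongLimit) (hcof : lam.ord.cof < kap) :
    ∃ Cs, IsClub' lam kap Cs ∧
      ∀ U ⊆ Cs, IsUnbounded lam kap U → IsStationary' lam kap U := by
  choose d hd using BoundedCode.exists_surjective hsl
  exact ⟨codeClub lam kap d, isClub_codeClub, fun U hU hUnb =>
    isStationary_of_isUnbounded_of_subset_codeClub hunc hcof hd hU hUnb⟩

/-- If `κ` is regular uncountable, `λ > κ` is a strong limit cardinal and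
`cf(λ) < κ`, then some club of `[λ]^{<κ}` has all its unbounded subsets
stationary. -/
theorem exists_club_all_unbounded_subsets_stationary_strongLimit
    (lam kap : Cardinal.{0}) (hreg : kap.IsRegular) (hunc : ℵ₀ < kap)
    (hkl : kap < lam) (hsl : lam.IsStrongLimit) (hcof : lam.ord.cof < kap) :
    ∃ Cs, IsClub' lam kap Cs ∧
      ∀ U ⊆ Cs, IsUnbounded lam kap U → IsStationary' lam kap U :=
  exists_club_all_unbounded_subsets_stationary_strongLimit_general lam kap hunc hsl hcof
end
end

section
/- Let κ be a regular uncountable cardinal and let λ > κ be a strong limit cardinal with cf(λ) < κ. Then gen(E_{λ,κ}) = 2^λ, where gen(E_{λ,κ}) is the least cardinality of a family B of members of the club filter E_{λ,κ} that generates E_{λ,κ} (i.e., every member of E_{λ,κ} contains a finite intersection of members of B). -/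
open Cardinal Set

noncomputable section

/-- `B` generates the filter `E`: `B ⊆ E` and every member of `E` contains
a finite intersection of members of `B`. -/
def Generates (E : Filter (Set Ordinal.{0})) (B : Set (Set (Set Ordinal.{0}))) : Prop :=
  (∀ X ∈ B, X ∈ E) ∧
  ∀ X ∈ E, ∃ I : Finset (Set (Set Ordinal.{0})),
    ↑I ⊆ B ∧ ⋂₀ (↑I : Set (Set (Set Ordinal.{0}))) ⊆ X

/-- `gen(E)`: the least cardinality of a subfamily of `E` generating `E`. -/
def genCard (E : Filter (Set Ordinal.{0})) : Cardinal.{1} :=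
  sInf {c | ∃ B, Generates E B ∧ Cardinal.mk ↥B = c}

/-!
Upper bound: the clubs themselves generate `E_{λ,κ}`, and a club only depends on the
restrictions to `λ` of countably many finitary functions, so there are at most
`(2^λ)^ℵ₀ = 2^λ` clubs.

Lower bound: as `λ` is a strong limit, every `A ⊆ λ` yields a unary function
`x ↦ code(A ∩ x) < λ`, and `A` is recovered from the values of this function along a cofinal
sequence `(x_i)_{i < cf λ}`. If `B` generates `E_{λ,κ}`, the club of that function contains a club
`C_I` attached to a finite `I ⊆ B`. Clubs are unbounded, so we may fix `a_{I,i} ∈ C_I` containing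
`x_i`; closure of `a_{I,i}` puts `code(A ∩ x_i)` into `a_{I,i}`. Hence
`A ↦ (I, (code(A ∩ x_i))_i)` is injective and `2^λ ≤ |B|^{<ω} · κ^{cf λ}`, while
`κ^{cf λ} ≤ 2^κ < λ < 2^λ`.
-/

universe u

lemma mk_sigma_pi_le {T ι : Type u} {β : T → ι → Type u} {c : Cardinal.{u}}
    (h : ∀ I i, #(β I i) ≤ c) : #(Σ I, ∀ i, β I i) ≤ #T * c ^ #ι := by
  rw [mk_sigma]
  refine (sum_le_sum _ _ fun I => ?_).trans_eq (sum_const' _ _)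
  rw [mk_pi]
  exact (prod_le_prod _ _ (h I)).trans_eq (prod_const' _ _)

lemma eq_of_forall_inter_Iio_eq {α : Type*} [Preorder α] {o : α} {S A A' : Set α}
    (hS : ∀ y < o, ∃ x ∈ S, y < x) (hA : A ⊆ Iio o) (hA' : A' ⊆ Iio o)
    (h : ∀ x ∈ S, A ∩ Iio x = A' ∩ Iio x) : A = A' := by
  have hcover (B : Set α) (hB : B ⊆ Iio o) : B = ⋃ x ∈ S, B ∩ Iio x := by
    rw [← inter_iUnion₂, eq_comm, inter_eq_left]
    intro y hy
    obtain ⟨x, hx, hyx⟩ := hS y (hB hy)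
    exact mem_iUnion₂.mpr ⟨x, hx, hyx⟩
  rw [hcover A hA, hcover A' hA']
  exact iUnion₂_congr h

section Hull

variable {lam kap : Cardinal.{0}} {G : Set FinFun} {s : Set Ordinal.{0}}

def valuesOn (G : Set FinFun) (s : Set Ordinal.{0}) : Set Ordinal.{0} :=
  {y | ∃ f ∈ G, ∃ v : Fin f.1 → Ordinal.{0}, (∀ i, v i ∈ s) ∧ f.2 v = y}

lemma mk_valuesOn_le (hG : G.Countable) (s : Set Ordinal.{0}) :
    #(valuesOn G s) ≤ max #s ℵ₀ := by
  set M := max #s ℵ₀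
  have hM : ℵ₀ ≤ M := le_max_right _ _
  have hrange : valuesOn G s ⊆
      range fun p : Σ f : G, Fin f.1.1 → s => p.1.1.2 fun i => p.2 i := by
    rintro _ ⟨f, hf, v, hv, rfl⟩
    exact ⟨⟨⟨f, hf⟩, fun i => ⟨v i, hv i⟩⟩, rfl⟩
  have htuples (n : ℕ) : #(Fin n → s) ≤ M := by
    rw [mk_arrow, lift_uzero, mk_fin, lift_natCast, power_natCast]
    exact (power_le_power_right (le_max_left _ _)).trans (power_nat_le hM)
  calc #(valuesOn G s) ≤ #(Σ f : G, Fin f.1.1 → s) :=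
        (mk_le_mk_of_subset hrange).trans mk_range_le
    _ ≤ #G * M := by
      rw [mk_sigma]
      exact (sum_le_sum _ _ fun f : G => htuples f.1.1).trans_eq (sum_const' _ _)
    _ ≤ ℵ₀ * M := mul_le_mul_left (le_aleph0_iff_set_countable.mpr hG) M
    _ = M := aleph0_mul_eq hM

def succSup (kap : Cardinal.{0}) (s : Set Ordinal.{0}) : Ordinal.{0} :=
  sSup ((· + 1) '' (s ∩ Iio kap.ord))

lemma lt_succSup {y : Ordinal.{0}} (hy : y ∈ s) (hyk : y < kap.ord) : y < succSup kap s :=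
  (Order.lt_add_one_iff.mpr le_rfl).trans_le <|
    le_csSup (Ordinal.bddAbove_of_small) (mem_image_of_mem _ ⟨hy, hyk⟩)

lemma succSup_lt_ord (hreg : kap.IsRegular) (hs : #s < lift.{1} kap) :
    succSup kap s < kap.ord := by
  refine Ordinal.sSup_add_one_lt_of_lt_cof ?_ fun _ hy => hy.2
  rw [← Ordinal.lift_cof, hreg.cof_ord]
  exact (mk_le_mk_of_subset inter_subset_left).trans_lt hs

def hullStep (kap : Cardinal.{0}) (G : Set FinFun) (s : Set Ordinal.{0}) : Set Ordinal.{0} :=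
  s ∪ valuesOn G s ∪ Iio (succSup kap s)

-- After `ω` steps the set is closed under `G` and meets `κ` in an initial segment; since `κ` is
-- regular uncountable, it still has size `< κ`.
def hull (kap : Cardinal.{0}) (G : Set FinFun) (s : Set Ordinal.{0}) : Set Ordinal.{0} :=
  ⋃ n : ℕ, (hullStep kap G)^[n] s

lemma subset_hullStep : s ⊆ hullStep kap G s :=
  subset_union_left.trans subset_union_left

lemma monotone_iterate_hullStep : Monotone fun n => (hullStep kap G)^[n] s :=
  monotone_nat_of_le_succ fun n => by
    simpa only [Function.iterate_succ_apply'] using subset_hullStep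

lemma hullStep_mem_smallSubsets (hreg : kap.IsRegular) (hunc : ℵ₀ < kap) (hkl : kap < lam)
    (hG : G.Countable) (hGf : FamOn lam G) (hs : s ∈ smallSubsets lam kap) :
    hullStep kap G s ∈ smallSubsets lam kap := by
  obtain ⟨hbelow, hsk⟩ := hs
  have hunc' : ℵ₀ < lift.{1} kap := aleph0_lt_lift.mpr hunc
  have hβ := succSup_lt_ord hreg hsk
  refine ⟨?_, ?_⟩
  · rintro y ((hy | ⟨f, hf, v, hv, rfl⟩) | hy)
    · exact hbelow y hy
    · exact hGf f hf v fun i => hbelow _ (hv i)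
    · exact (hy.trans hβ).trans (ord_lt_ord.mpr hkl)
  · refine (mk_union_le _ _).trans_lt (add_lt_of_lt hunc'.le
      ((mk_union_le _ _).trans_lt (add_lt_of_lt hunc'.le hsk
        ((mk_valuesOn_le hG s).trans_lt (max_lt hsk hunc')))) ?_)
    rw [mk_Iio_ordinal, lift_lt]
    exact lt_ord.mp hβ

lemma iterate_hullStep_mem_smallSubsets (hreg : kap.IsRegular) (hunc : ℵ₀ < kap)
    (hkl : kap < lam) (hG : G.Countable) (hGf : FamOn lam G) (hs : s ∈ smallSubsets lam kap)
    (n : ℕ) : (hullStep kap G)^[n] s ∈ smallSubsets lam kap :=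
  MapsTo.iterate (fun _ => hullStep_mem_smallSubsets hreg hunc hkl hG hGf) n hs

lemma hull_mem_smallSubsets (hreg : kap.IsRegular) (hunc : ℵ₀ < kap) (hkl : kap < lam)
    (hG : G.Countable) (hGf : FamOn lam G) (hs : s ∈ smallSubsets lam kap) :
    hull kap G s ∈ smallSubsets lam kap := by
  have hiter := iterate_hullStep_mem_smallSubsets hreg hunc hkl hG hGf hs
  refine ⟨fun y hy => ?_, ?_⟩
  · obtain ⟨n, hn⟩ := mem_iUnion.mp hy
    exact (hiter n).1 y hn
  · have := mk_iUnion_le_sum_mk_lift (f := fun n : ℕ => (hullStep kap G)^[n] s)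
    rw [lift_uzero] at this
    refine this.trans_lt (sum_lt_lift_of_isRegular hreg.lift ?_ fun n => ?_)
    · rw [mk_nat, lift_aleph0]
      exact aleph0_lt_lift.mpr hunc
    · exact (hiter n).2

lemma apply_mem_hull {f : FinFun} (hf : f ∈ G) {v : Fin f.1 → Ordinal.{0}}
    (hv : ∀ i, v i ∈ hull kap G s) : f.2 v ∈ hull kap G s := by
  choose n hn using fun i => mem_iUnion.mp (hv i)
  have hvN (i) : v i ∈ (hullStep kap G)^[Finset.univ.sup n] s :=
    monotone_iterate_hullStep (Finset.le_sup (Finset.mem_univ i)) (hn i)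
  refine mem_iUnion.mpr ⟨Finset.univ.sup n + 1, ?_⟩
  rw [Function.iterate_succ_apply']
  exact Or.inl (Or.inr ⟨f, hf, v, hvN, rfl⟩)

lemma exists_hull_inter_Iio_ord_eq_Iio (hreg : kap.IsRegular) (hunc : ℵ₀ < kap)
    (hsmall : ∀ n : ℕ, #((hullStep kap G)^[n] s) < lift.{1} kap) :
    ∃ β < kap.ord, hull kap G s ∩ Iio kap.ord = Iio β := by
  set β := ⨆ n : ℕ, succSup kap ((hullStep kap G)^[n] s)
  refine ⟨β, Ordinal.iSup_lt_of_lt_cof ?_ fun n => succSup_lt_ord hreg (hsmall n), ?_⟩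
  · rwa [mk_nat, hreg.cof_ord]
  ext y
  constructor
  · rintro ⟨hy, hyk⟩
    obtain ⟨n, hn⟩ := mem_iUnion.mp hy
    exact (lt_succSup hn hyk).trans_le (Ordinal.le_iSup _ n)
  · intro hy
    obtain ⟨n, hn⟩ := Ordinal.lt_iSup_iff.mp hy
    refine ⟨mem_iUnion.mpr ⟨n + 1, ?_⟩, hn.trans (succSup_lt_ord hreg (hsmall n))⟩
    rw [Function.iterate_succ_apply']
    exact Or.inr hn

lemma hull_mem_clubOf (hreg : kap.IsRegular) (hunc : ℵ₀ < kap) (hkl : kap < lam)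
    (hG : G.Countable) (hGf : FamOn lam G) (hs : s ∈ smallSubsets lam kap) :
    hull kap G s ∈ clubOf lam kap G :=
  have hiter := iterate_hullStep_mem_smallSubsets hreg hunc hkl hG hGf hs
  ⟨hull_mem_smallSubsets hreg hunc hkl hG hGf hs, fun _ hf _ hv => apply_mem_hull hf hv,
    exists_hull_inter_Iio_ord_eq_Iio hreg hunc fun n => (hiter n).2⟩

lemma subset_hull : s ⊆ hull kap G s :=
  subset_iUnion (fun n => (hullStep kap G)^[n] s) 0

theorem isUnbounded_clubOf (hreg : kap.IsRegular) (hunc : ℵ₀ < kap) (hkl : kap < lam)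
    (hG : G.Countable) (hGf : FamOn lam G) : IsUnbounded lam kap (clubOf lam kap G) :=
  fun _ hb => ⟨_, hull_mem_clubOf hreg hunc hkl hG hGf hb, subset_hull⟩

lemma exists_mem_clubOf (hreg : kap.IsRegular) (hunc : ℵ₀ < kap) (hkl : kap < lam)
    (hG : G.Countable) (hGf : FamOn lam G) {x : Ordinal.{0}} (hx : x < lam.ord) :
    ∃ a ∈ clubOf lam kap G, x ∈ a := by
  have hsmall : {x} ∈ smallSubsets lam kap :=
    ⟨by simpa using hx,
      (mk_singleton _).trans_lt (one_lt_aleph0.trans (aleph0_lt_lift.mpr hunc))⟩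
  obtain ⟨a, ha, hxa⟩ := isUnbounded_clubOf hreg hunc hkl hG hGf _ hsmall
  exact ⟨a, ha, singleton_subset_iff.mp hxa⟩

end Hull

section ClubFilter

variable {lam kap : Cardinal.{0}}

lemma clubOf_anti : Antitone (clubOf lam kap) :=
  fun _ _ h _ ⟨hsmall, hclosed, hseg⟩ => ⟨hsmall, fun f hf => hclosed f (h hf), hseg⟩

lemma exists_clubOf_subset_of_mem_clubFilter {X : Set (Set Ordinal.{0})}
    (hX : X ∈ clubFilter lam kap) :
    ∃ G : Set FinFun, G.Countable ∧ FamOn lam G ∧ clubOf lam kap G ⊆ X := by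
  induction hX with
  | basic hC =>
    obtain ⟨F, hF, hFf, rfl⟩ := hC
    exact ⟨F, hF, hFf, subset_rfl⟩
  | univ => exact ⟨∅, countable_empty, fun _ hf => hf.elim, subset_univ _⟩
  | superset _ hXY ih =>
    obtain ⟨G, hG, hGf, hsub⟩ := ih
    exact ⟨G, hG, hGf, hsub.trans hXY⟩
  | inter _ _ ih₁ ih₂ =>
    obtain ⟨G₁, hG₁, hG₁f, hsub₁⟩ := ih₁
    obtain ⟨G₂, hG₂, hG₂f, hsub₂⟩ := ih₂
    refine ⟨G₁ ∪ G₂, hG₁.union hG₂, fun f hf => hf.elim (hG₁f f) (hG₂f f), ?_⟩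
    exact subset_inter ((clubOf_anti subset_union_left).trans hsub₁)
      ((clubOf_anti subset_union_right).trans hsub₂)

lemma generates_setOf_isClub : Generates (clubFilter lam kap) {C | IsClub' lam kap C} := by
  refine ⟨fun _ hC => Filter.mem_generate_of_mem hC, fun X hX => ?_⟩
  obtain ⟨t, hts, htf, htX⟩ := Filter.mem_generate_iff.mp hX
  exact ⟨htf.toFinset, by simpa using hts, by simpa using htX⟩

end ClubFilter

section Counting

variable {lam kap : Cardinal.{0}}

def truncBelow (lam : Cardinal.{0}) (f : FinFun) : FinFun :=
  ⟨f.1, fun v => if ∀ i, v i < lam.ord then f.2 v else 0⟩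

lemma clubOf_image_truncBelow (F : Set FinFun) :
    clubOf lam kap (truncBelow lam '' F) = clubOf lam kap F := by
  have htrunc {a : Set Ordinal.{0}} (ha : a ∈ smallSubsets lam kap) (f : FinFun)
      (v : Fin f.1 → Ordinal.{0}) (hv : ∀ i, v i ∈ a) : (truncBelow lam f).2 v = f.2 v :=
    if_pos fun i => ha.1 _ (hv i)
  ext a
  refine ⟨fun ⟨ha, hclosed, hseg⟩ => ⟨ha, fun f hf v hv => ?_, hseg⟩,
    fun ⟨ha, hclosed, hseg⟩ => ⟨ha, ?_, hseg⟩⟩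
  · exact htrunc ha f v hv ▸ hclosed _ (mem_image_of_mem _ hf) v hv
  · rintro _ ⟨f, hf, rfl⟩ v hv
    exact (htrunc ha f v hv).symm ▸ hclosed f hf v hv

abbrev FinFunOn (lam : Cardinal.{0}) : Type 1 :=
  Σ n : ℕ, (Fin n → Iio lam.ord) → Iio lam.ord

def FinFunOn.toFinFun (g : FinFunOn lam) : FinFun :=
  ⟨g.1, fun v => if h : ∀ i, v i < lam.ord then g.2 fun i => ⟨v i, h i⟩ else 0⟩

lemma FinFunOn.toFinFun_injective : Function.Injective (FinFunOn.toFinFun (lam := lam)) := by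
  rintro ⟨n, g⟩ ⟨m, g'⟩ h
  obtain ⟨rfl, h⟩ := Sigma.mk.inj_iff.mp h
  congr
  funext v
  have hv : ∀ i, (v i : Ordinal.{0}) < lam.ord := fun i => (v i).2
  have := congrFun (eq_of_heq h) fun i => v i
  dsimp only at this
  rwa [dif_pos hv, dif_pos hv, Subtype.coe_inj] at this

lemma truncBelow_image_subset_range {F : Set FinFun} (hF : FamOn lam F) :
    truncBelow lam '' F ⊆ range (FinFunOn.toFinFun (lam := lam)) := by
  rintro _ ⟨f, hf, rfl⟩
  refine ⟨⟨f.1, fun v => ⟨f.2 fun i => v i, hF f hf _ fun i => (v i).2⟩⟩, ?_⟩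
  simp only [FinFunOn.toFinFun, truncBelow]
  congr

lemma mk_finFunOn_le (hlam : ℵ₀ ≤ lam) : #(FinFunOn lam) ≤ 2 ^ lift.{1} lam := by
  have hl : ℵ₀ ≤ lift.{1} lam := aleph0_le_lift.mpr hlam
  have harity (n : ℕ) : #((Fin n → Iio lam.ord) → Iio lam.ord) ≤ 2 ^ lift.{1} lam := by
    rw [mk_arrow, mk_arrow, mk_Iio_ordinal, card_ord]
    simp only [lift_id, lift_uzero, mk_fin, lift_natCast, power_natCast]
    calc lift.{1} lam ^ lift.{1} lam ^ n ≤ lift.{1} lam ^ lift.{1} lam :=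
          power_le_power_left (lift_eq_zero.not.mpr (aleph0_pos.trans_le hlam).ne')
            (power_nat_le hl)
      _ = 2 ^ lift.{1} lam := power_self_eq hl
  rw [mk_sigma]
  refine (sum_le_sum _ _ harity).trans ?_
  rw [sum_const, mk_nat, lift_aleph0, lift_uzero, aleph0_mul_eq (hl.trans (cantor _).le)]

theorem mk_setOf_isClub_le (hlam : ℵ₀ ≤ lam) :
    #{C | IsClub' lam kap C} ≤ 2 ^ lift.{1} lam := by
  have hl : ℵ₀ ≤ lift.{1} lam := aleph0_le_lift.mpr hlam
  have hsub : {C | IsClub' lam kap C} ⊆ range fun R : {R : Set (FinFunOn lam) // #R ≤ ℵ₀} =>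
      clubOf lam kap (FinFunOn.toFinFun '' R.1) := by
    rintro _ ⟨F, hF, hFf, rfl⟩
    refine ⟨⟨FinFunOn.toFinFun ⁻¹' (truncBelow lam '' F), ?_⟩, ?_⟩
    · exact le_aleph0_iff_set_countable.mpr ((hF.image _).preimage FinFunOn.toFinFun_injective)
    · dsimp only
      rw [image_preimage_eq_of_subset (truncBelow_image_subset_range hFf),
        clubOf_image_truncBelow]
  calc #{C | IsClub' lam kap C}
      ≤ #{R : Set (FinFunOn lam) // #R ≤ ℵ₀} := (mk_le_mk_of_subset hsub).trans mk_range_le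
    _ ≤ max #(FinFunOn lam) ℵ₀ ^ ℵ₀ := mk_bounded_set_le _ _
    _ ≤ (2 ^ lift.{1} lam) ^ ℵ₀ :=
      power_le_power_right (max_le (mk_finFunOn_le hlam) (hl.trans (cantor _).le))
    _ = 2 ^ lift.{1} lam := by rw [← power_mul, mul_aleph0_eq hl]

end Counting

lemma exists_cofinal_subset_Iio {o : Ordinal.{0}} (ho : Order.IsSuccLimit o) :
    ∃ S ⊆ Iio o, #S = lift.{1} o.cof ∧ ∀ y < o, ∃ x ∈ S, y < x := by
  obtain ⟨s, hs, hsmk⟩ := Order.exists_cof_eq (Iio o)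
  refine ⟨Subtype.val '' s, image_subset_iff.mpr fun x _ => x.2, ?_, fun y hy => ?_⟩
  · rw [mk_image_eq Subtype.val_injective, hsmk, Ordinal.cof_Iio, Ordinal.lift_cof]
  · obtain ⟨x, hx, hyx⟩ := hs ⟨y + 1, ho.add_one_lt hy⟩
    exact ⟨x, mem_image_of_mem _ hx, Order.add_one_le_iff.mp hyx⟩

lemma exists_code_inter_Iio {lam : Cardinal.{0}} (hsl : lam.IsStrongLimit) :
    ∃ code : Ordinal.{0} → Set Ordinal.{0} → Ordinal.{0}, ∀ x < lam.ord,
      (∀ A, code x A < lam.ord) ∧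
        ∀ A A', code x A = code x A' → A ∩ Iio x = A' ∩ Iio x := by
  have (x : Ordinal.{0}) : ∃ c : Set Ordinal.{0} → Ordinal.{0}, x < lam.ord →
      (∀ A, c A < lam.ord) ∧ ∀ A A', c A = c A' → A ∩ Iio x = A' ∩ Iio x := by
    by_cases hx : x < lam.ord
    swap
    · exact ⟨fun _ => 0, fun h => (hx h).elim⟩
    have hmk : #(𝒫 Iio x) ≤ #(Iio lam.ord) := by
      rw [mk_powerset, mk_Iio_ordinal, mk_Iio_ordinal, card_ord, ← lift_two_power, lift_le]
      exact (hsl.isStrongPrelimit (lt_ord.mp hx)).le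
    obtain ⟨e⟩ := (le_def _ _).mp hmk
    refine ⟨fun A => e ⟨A ∩ Iio x, inter_subset_right⟩, fun _ => ⟨fun A => (e _).2, ?_⟩⟩
    exact fun A A' h => congrArg Subtype.val (e.injective (Subtype.ext h))
  choose code hcode using this
  exact ⟨code, hcode⟩

theorem two_pow_le_mul_of_forall_exists_clubOf_subset {lam kap : Cardinal.{0}}
    (hreg : kap.IsRegular) (hunc : ℵ₀ < kap) (hkl : kap < lam) (hsl : lam.IsStrongLimit)
    {T : Type 1} (G : T → Set FinFun) (hG : ∀ I, (G I).Countable)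
    (hGf : ∀ I, FamOn lam (G I))
    (hcover : ∀ g : FinFun, FamOn lam {g} →
      ∃ I, clubOf lam kap (G I) ⊆ clubOf lam kap {g}) :
    2 ^ lift.{1} lam ≤ #T * lift.{1} kap ^ lift.{1} lam.ord.cof := by
  obtain ⟨code, hcode⟩ := exists_code_inter_Iio hsl
  obtain ⟨S, hSo, hSmk, hS⟩ := exists_cofinal_subset_Iio (isSuccLimit_ord hsl.aleph0_le)
  choose a ha hxa using fun (I : T) (x : S) =>
    exists_mem_clubOf hreg hunc hkl (hG I) (hGf I) (hSo x.2)
  have htrace (A : Set Ordinal.{0}) : ∃ I, ∀ x : S, code x A ∈ a I x := by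
    obtain ⟨I, hI⟩ := hcover ⟨1, fun v => code (v 0) A⟩ <| by
      rintro _ rfl v hv
      exact (hcode _ (hv 0)).1 A
    exact ⟨I, fun x => (hI (ha I x)).2.1 _ rfl (fun _ => x) fun _ => hxa I x⟩
  choose IA hIA using htrace
  let Ψ : 𝒫 Iio lam.ord → Σ I : T, ∀ x : S, a I x :=
    fun A => ⟨IA A, fun x => ⟨code x A, hIA A x⟩⟩
  have hΨ : Function.Injective Ψ := by
    refine Function.Injective.of_comp (f := fun p (x : S) => (p.2 x : Ordinal.{0}))
      fun A A' h => Subtype.ext ?_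
    exact eq_of_forall_inter_Iio_eq hS A.2 A'.2 fun x hx =>
      (hcode x (hSo hx)).2 _ _ (congrFun h ⟨x, hx⟩)
  calc 2 ^ lift.{1} lam = #(𝒫 Iio lam.ord) := by rw [mk_powerset, mk_Iio_ordinal, card_ord]
    _ ≤ #(Σ I : T, ∀ x : S, a I x) := mk_le_of_injective hΨ
    _ ≤ #T * lift.{1} kap ^ lift.{1} lam.ord.cof :=
      hSmk ▸ mk_sigma_pi_le fun I x => (ha I x).1.2.le

theorem two_pow_le_mk_of_generates {lam kap : Cardinal.{0}} (hreg : kap.IsRegular)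
    (hunc : ℵ₀ < kap) (hkl : kap < lam) (hsl : lam.IsStrongLimit) (hcof : lam.ord.cof < kap)
    {B : Set (Set (Set Ordinal.{0}))} (hB : Generates (clubFilter lam kap) B) :
    2 ^ lift.{1} lam ≤ #B := by
  let T := {I : Finset (Set (Set Ordinal.{0})) // ∀ U ∈ I, U ∈ B}
  have hG (I : T) : ∃ G, G.Countable ∧ FamOn lam G ∧ clubOf lam kap G ⊆ ⋂₀ ↑I.1 :=
    exists_clubOf_subset_of_mem_clubFilter <|
      (Filter.sInter_mem I.1.finite_toSet).mpr fun U hU => hB.1 U (I.2 U hU)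
  choose G hGc hGf hGsub using hG
  have hbound := two_pow_le_mul_of_forall_exists_clubOf_subset hreg hunc hkl hsl G hGc hGf
    fun g hg => by
      obtain ⟨I, hIB, hIg⟩ :=
        hB.2 _ (Filter.mem_generate_of_mem ⟨{g}, countable_singleton g, hg, rfl⟩)
      exact ⟨⟨I, hIB⟩, (hGsub _).trans hIg⟩
  have hT : #T ≤ max ℵ₀ #B :=
    (mk_congr (Equiv.finsetSubtypeComm (· ∈ B))).symm.trans_le
      ((mk_le_of_surjective List.toFinset_surjective).trans (mk_list_le_max _))
  have hpow : lift.{1} kap ^ lift.{1} lam.ord.cof < 2 ^ lift.{1} lam :=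
    calc lift.{1} kap ^ lift.{1} lam.ord.cof ≤ lift.{1} kap ^ lift.{1} kap :=
          power_le_power_left (lift_eq_zero.not.mpr hreg.pos.ne') (lift_le.mpr hcof.le)
      _ = lift.{1} (2 ^ kap) := by
          rw [power_self_eq (aleph0_le_lift.mpr hreg.aleph0_le), lift_two_power]
      _ < lift.{1} lam := lift_lt.mpr (hsl.isStrongPrelimit hkl)
      _ < 2 ^ lift.{1} lam := cantor _
  have h2 : ℵ₀ < 2 ^ lift.{1} lam :=
    (aleph0_le_lift.mpr hsl.aleph0_le).trans_lt (cantor _)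
  by_contra! hB'
  exact (hbound.trans_lt (mul_lt_of_lt h2.le (hT.trans_lt (max_lt h2 hB')) hpow)).false

lemma genCard_le_mk {E : Filter (Set Ordinal.{0})} {B : Set (Set (Set Ordinal.{0}))}
    (hB : Generates E B) : genCard E ≤ #B :=
  csInf_le' ⟨B, hB, rfl⟩

lemma le_genCard {E : Filter (Set Ordinal.{0})} {B₀ : Set (Set (Set Ordinal.{0}))}
    {c : Cardinal.{1}} (hB₀ : Generates E B₀) (h : ∀ B, Generates E B → c ≤ #B) :
    c ≤ genCard E :=
  le_csInf ⟨_, B₀, hB₀, rfl⟩ fun _ ⟨B, hB, hc⟩ => hc ▸ h B hB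

/-- For `κ` regular uncountable and `λ > κ` a strong limit cardinal of
cofinality `< κ`: `gen(E_{λ,κ}) = 2^λ`. -/
theorem genCard_clubFilter_eq_of_strongLimit
    (lam kap : Cardinal.{0}) (hreg : kap.IsRegular) (hunc : ℵ₀ < kap)
    (hkl : kap < lam) (hsl : lam.IsStrongLimit) (hcof : lam.ord.cof < kap) :
    genCard (clubFilter lam kap) = 2 ^ Cardinal.lift.{1} lam :=
  le_antisymm
    ((genCard_le_mk generates_setOf_isClub).trans (mk_setOf_isClub_le hsl.aleph0_le))
    (le_genCard generates_setOf_isClub fun _ hB =>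
      two_pow_le_mk_of_generates hreg hunc hkl hsl hcof hB)
end
end
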